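/- It is impossible to partition the unit square Q = [0,1]×[0,1] into five disjoint sets A_0, A_1, A_2, A_3, A_4 satisfying: (0,1) ∈ A_2 and (1,1) ∈ A_1; A_4 does not meet the side [0,1]×{1}; A_0 does not meet the other three sides; A_3, A_2 ∪ A_4, and A_1 ∪ A_3 ∪ A_4 are closed; A_0 is open with ∂A_0 ⊆ A_2 ∪ A_3 ∪ A_4. -/

import Mathlib

open Set

/-- The unit square in `ℝ²`. -/
def unitSquare : Set (ℝ × ℝ) := Icc 0 1 ×ˢ Icc 0 1

/-- `A` is closed relative to the subspace `Q`. -/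
def relClosed (Q A : Set (ℝ × ℝ)) : Prop := closure A ∩ Q ⊆ A

/-- The boundary of `A` relative to the subspace `Q`. -/
def relFrontier (Q A : Set (ℝ × ℝ)) : Set (ℝ × ℝ) :=
  Q ∩ closure A ∩ closure (Q \ A)

/-!
Glue `φ` on `C₁` with `-φ` on `C₂` into a map to `ℝ ⧸ 2ℤ`; it is well defined and continuous
when `C₁, C₂` are closed and `φ` is integer-valued on `C₁ ∩ C₂`. On a simply connected space it
lifts to a real function `G`, and then `G - φ` is constant on connected subsets of `C₁` while
`G + φ` is constant on connected subsets of `C₂`, so `φ` takes the same value at two points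
joined by both. For the square take `C₁ = closure A₀ ∪ N ∪ P`, `C₂ = Q \ A₀` and an Urysohn
function `φ` equal to `0` on `N = A₂ ∪ A₄` and to `1` on `P = A₃ ∪ (A₁ ∩ top side)`; the top side
and the other three sides both join `(0,1) ∈ A₂` to `(1,1) ∈ A₁`.
-/

open Function

theorem AddCircle.coe_neg_intCast (n : ℤ) : ((-n : ℝ) : AddCircle (2 : ℝ)) = (n : ℝ) := by
  rw [QuotientAddGroup.eq, AddSubgroup.mem_zmultiples_iff]
  exact ⟨n, by rw [zsmul_eq_mul]; ring⟩

section Fold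

variable {X : Type*}

open scoped Classical in
noncomputable def foldToCircle (C : Set X) (φ : X → ℝ) (x : X) : AddCircle (2 : ℝ) :=
  ↑(if x ∈ C then φ x else -φ x)

variable {C₁ C₂ : Set X} {φ : X → ℝ} {x : X}

theorem foldToCircle_eq_coe (hx : x ∈ C₁) : foldToCircle C₁ φ x = φ x := by
  simp [foldToCircle, hx]

theorem foldToCircle_eq_coe_neg (hint : ∀ y ∈ C₁ ∩ C₂, ∃ n : ℤ, φ y = n) (hx : x ∈ C₂) :
    foldToCircle C₁ φ x = ↑(-φ x) := by
  by_cases hx₁ : x ∈ C₁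
  · obtain ⟨n, hn⟩ := hint x ⟨hx₁, hx⟩
    rw [foldToCircle_eq_coe hx₁, hn, AddCircle.coe_neg_intCast]
  · simp [foldToCircle, hx₁]

theorem continuous_foldToCircle [TopologicalSpace X] (hC₁ : IsClosed C₁) (hC₂ : IsClosed C₂)
    (hcover : C₁ ∪ C₂ = univ) (hφ : Continuous φ) (hint : ∀ y ∈ C₁ ∩ C₂, ∃ n : ℤ, φ y = n) :
    Continuous (foldToCircle C₁ φ) := by
  rw [← continuousOn_univ, ← hcover]
  refine ContinuousOn.union_of_isClosed ?_ ?_ hC₁ hC₂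
  · exact (continuous_quotient_mk'.comp hφ).continuousOn.congr fun y hy => foldToCircle_eq_coe hy
  · exact (continuous_quotient_mk'.comp hφ.neg).continuousOn.congr
      fun y hy => foldToCircle_eq_coe_neg hint hy

end Fold

theorem exists_lift_addCircle {X : Type*} [TopologicalSpace X] [SimplyConnectedSpace X]
    [LocallyPathConnectedSpace X] {p : ℝ} {f : X → AddCircle p} (hf : Continuous f) :
    ∃ G : C(X, ℝ), ∀ x, (G x : AddCircle p) = f x := by
  obtain ⟨x₀⟩ := (inferInstance : Nonempty X)
  obtain ⟨e₀, he₀⟩ := QuotientAddGroup.mk_surjective (f x₀)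
  obtain ⟨G, ⟨-, hG⟩, -⟩ :=
    (AddCircle.isCoveringMap_coe p).existsUnique_continuousMap_lifts ⟨f, hf⟩ x₀ e₀ he₀
  exact ⟨G, congrFun hG⟩

theorem IsPreconnected.eq_of_coe_addCircle_eq_zero {X : Type*} [TopologicalSpace X] {S : Set X}
    (hS : IsPreconnected S) {p : ℝ} {f : X → ℝ} (hf : ContinuousOn f S)
    (h : ∀ x ∈ S, (f x : AddCircle p) = 0) {x y : X} (hx : x ∈ S) (hy : y ∈ S) : f x = f y :=
  hS.constant_of_mapsTo (T := AddSubgroup.zmultiples p)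
    (isDiscrete_iff_discreteTopology.2 <|
      inferInstanceAs (DiscreteTopology (AddSubgroup.zmultiples p))) hf
    (fun z hz => (QuotientAddGroup.eq_zero_iff _).1 (h z hz)) hx hy

theorem apply_eq_of_isClosed_cover {X : Type*} [TopologicalSpace X] [SimplyConnectedSpace X]
    [LocallyPathConnectedSpace X] {C₁ C₂ : Set X} (hC₁ : IsClosed C₁) (hC₂ : IsClosed C₂)
    (hcover : C₁ ∪ C₂ = univ) {φ : X → ℝ} (hφ : Continuous φ)
    (hint : ∀ x ∈ C₁ ∩ C₂, ∃ n : ℤ, φ x = n) {T E : Set X} (hT : IsPreconnected T)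
    (hE : IsPreconnected E) (hTC : T ⊆ C₁) (hEC : E ⊆ C₂) {a b : X} (ha : a ∈ T ∩ E)
    (hb : b ∈ T ∩ E) : φ a = φ b := by
  obtain ⟨G, hG⟩ := exists_lift_addCircle (continuous_foldToCircle hC₁ hC₂ hcover hφ hint)
  have hGT : G a - φ a = G b - φ b :=
    hT.eq_of_coe_addCircle_eq_zero (f := fun x => G x - φ x) (by fun_prop)
      (fun x hx => by rw [AddCircle.coe_sub, hG, foldToCircle_eq_coe (hTC hx), sub_self])
      ha.1 hb.1
  have hGE : G a + φ a = G b + φ b :=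
    hE.eq_of_coe_addCircle_eq_zero (f := fun x => G x + φ x) (by fun_prop)
      (fun x hx => by
        rw [AddCircle.coe_add, hG, foldToCircle_eq_coe_neg hint (hEC hx), AddCircle.coe_neg,
          neg_add_cancel])
      ha.2 hb.2
  linarith

theorem not_exists_five_partition {X : Type*} [TopologicalSpace X] [SimplyConnectedSpace X]
    [LocallyPathConnectedSpace X] [NormalSpace X] {A : Fin 5 → Set X}
    (hdisj : Pairwise (Disjoint on A)) (hcover : ⋃ i, A i = univ) {T E : Set X}
    (hT : IsPreconnected T) (hTc : IsClosed T) (hE : IsPreconnected E) {a b : X}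
    (ha : a ∈ T ∩ E) (hb : b ∈ T ∩ E) (ha₂ : a ∈ A 2) (hb₁ : b ∈ A 1) (h₄ : Disjoint (A 4) T)
    (h₀ : Disjoint (A 0) E) (hc₃ : IsClosed (A 3)) (hc₂₄ : IsClosed (A 2 ∪ A 4))
    (hc₁₃₄ : IsClosed (A 1 ∪ A 3 ∪ A 4)) (ho₀ : IsOpen (A 0))
    (hfr : frontier (A 0) ⊆ A 2 ∪ A 3 ∪ A 4) : False := by
  set N := A 2 ∪ A 4
  -- Equal to `A 3 ∪ (A 1 ∩ T)` because `A 4` misses `T`, and visibly closed in this form.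
  set P := A 3 ∪ (A 1 ∪ A 3 ∪ A 4) ∩ T
  have hPc : IsClosed P := hc₃.union (hc₁₃₄.inter hTc)
  have hNP : Disjoint N P := by
    rw [Set.disjoint_left]
    rintro x (hx | hx) (hy | ⟨(hy | hy) | hy, hyT⟩)
    all_goals first
      | exact disjoint_left.1 h₄ hx hyT
      | exact disjoint_left.1 (hdisj (by decide)) hx hy
  obtain ⟨φ, hφN, hφP, -⟩ := exists_continuous_zero_one_of_isClosed hc₂₄ hPc hNP
  have hint : ∀ x ∈ (closure (A 0) ∪ (N ∪ P)) ∩ (A 0)ᶜ, ∃ n : ℤ, φ x = n := by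
    rintro x ⟨hx, hx₀⟩
    have hxNP : x ∈ N ∪ P := by
      rcases hx with hx | hx
      · rcases hfr (by rw [ho₀.frontier_eq]; exact ⟨hx, hx₀⟩) with (h₂ | h₃) | h₄
        exacts [Or.inl (Or.inl h₂), Or.inr (Or.inl h₃), Or.inl (Or.inr h₄)]
      · exact hx
    rcases hxNP with hxN | hxP
    exacts [⟨0, by simp [hφN hxN]⟩, ⟨1, by simp [hφP hxP]⟩]
  have hTC : T ⊆ closure (A 0) ∪ (N ∪ P) := by
    intro x hx
    obtain ⟨i, hi⟩ := mem_iUnion.1 (hcover ▸ mem_univ x)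
    fin_cases i
    exacts [Or.inl (subset_closure hi), Or.inr (Or.inr (Or.inr ⟨Or.inl (Or.inl hi), hx⟩)),
      Or.inr (Or.inl (Or.inl hi)), Or.inr (Or.inr (Or.inl hi)), Or.inr (Or.inl (Or.inr hi))]
  have hcover' : closure (A 0) ∪ (N ∪ P) ∪ (A 0)ᶜ = univ :=
    eq_univ_of_forall fun x => (em (x ∈ A 0)).imp (fun hx => Or.inl (subset_closure hx)) id
  have hab := apply_eq_of_isClosed_cover (isClosed_closure.union (hc₂₄.union hPc))
    ho₀.isClosed_compl hcover' φ.continuous hint hT hE hTC h₀.subset_compl_left ha hb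
  rw [hφN (Or.inl ha₂), hφP (Or.inr ⟨Or.inl (Or.inl hb₁), hb.1⟩)] at hab
  norm_num at hab

theorem isClosed_preimage_val_of_relClosed {Q A : Set (ℝ × ℝ)} (h : relClosed Q A) :
    IsClosed ((↑) ⁻¹' A : Set Q) :=
  isClosed_of_closure_subset fun x hx =>
    h ⟨MapsTo.closure (mapsTo_preimage _ _) continuous_subtype_val hx, x.2⟩

theorem frontier_preimage_val_subset_relFrontier (Q A : Set (ℝ × ℝ)) :
    frontier ((↑) ⁻¹' A : Set Q) ⊆ (↑) ⁻¹' relFrontier Q A := by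
  intro x hx
  rw [frontier_eq_closure_inter_closure] at hx
  exact ⟨⟨x.2, MapsTo.closure (mapsTo_preimage _ _) continuous_subtype_val hx.1⟩,
    MapsTo.closure (fun y hy => mem_sdiff_of_mem y.2 hy) continuous_subtype_val hx.2⟩

theorem convex_unitSquare : Convex ℝ unitSquare := (convex_Icc 0 1).prod (convex_Icc 0 1)

instance : SimplyConnectedSpace unitSquare := by
  have := convex_unitSquare.contractibleSpace ⟨(0, 0), ⟨le_rfl, zero_le_one⟩, le_rfl, zero_le_one⟩
  infer_instance

instance : LocallyPathConnectedSpace unitSquare := convex_unitSquare.locallyPathConnectedSpace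

theorem isPathConnected_Icc_prod_singleton (y : ℝ) :
    IsPathConnected (Icc (0 : ℝ) 1 ×ˢ ({y} : Set ℝ)) :=
  ((convex_Icc 0 1).prod (convex_singleton y)).isPathConnected ⟨(0, y), ⟨le_rfl, zero_le_one⟩, rfl⟩

theorem isPathConnected_singleton_prod_Icc (x : ℝ) :
    IsPathConnected (({x} : Set ℝ) ×ˢ Icc (0 : ℝ) 1) :=
  ((convex_singleton x).prod (convex_Icc 0 1)).isPathConnected ⟨(x, 0), rfl, le_rfl, zero_le_one⟩

theorem isPathConnected_three_sides :
    IsPathConnected (Icc (0 : ℝ) 1 ×ˢ ({0} : Set ℝ) ∪ ({0} : Set ℝ) ×ˢ Icc 0 1 ∪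
      ({1} : Set ℝ) ×ˢ Icc 0 1) :=
  ((isPathConnected_Icc_prod_singleton 0).union (isPathConnected_singleton_prod_Icc 0)
    ⟨(0, 0), ⟨⟨le_rfl, zero_le_one⟩, rfl⟩, rfl, le_rfl, zero_le_one⟩).union
    (isPathConnected_singleton_prod_Icc 1)
    ⟨(1, 0), Or.inl ⟨⟨zero_le_one, le_rfl⟩, rfl⟩, rfl, le_rfl, zero_le_one⟩

theorem top_side_subset_unitSquare : Icc (0 : ℝ) 1 ×ˢ ({1} : Set ℝ) ⊆ unitSquare :=
  prod_mono subset_rfl (singleton_subset_iff.2 ⟨zero_le_one, le_rfl⟩)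

theorem three_sides_subset_unitSquare :
    Icc (0 : ℝ) 1 ×ˢ ({0} : Set ℝ) ∪ ({0} : Set ℝ) ×ˢ Icc 0 1 ∪ ({1} : Set ℝ) ×ˢ Icc 0 1 ⊆
      unitSquare := by
  have h₀ : ({0} : Set ℝ) ⊆ Icc 0 1 := singleton_subset_iff.2 ⟨le_rfl, zero_le_one⟩
  have h₁ : ({1} : Set ℝ) ⊆ Icc 0 1 := singleton_subset_iff.2 ⟨zero_le_one, le_rfl⟩
  exact union_subset (union_subset (prod_mono subset_rfl h₀) (prod_mono h₀ subset_rfl))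
    (prod_mono h₁ subset_rfl)

theorem no_five_decomposition_of_unit_square :
    ¬ ∃ A : Fin 5 → Set (ℝ × ℝ),
      (∀ i, A i ⊆ unitSquare) ∧
      (∀ i j, i ≠ j → A i ∩ A j = ∅) ∧
      (⋃ i, A i) = unitSquare ∧
      ((0, 1) ∈ A 2) ∧ ((1, 1) ∈ A 1) ∧
      (A 4 ∩ Icc 0 1 ×ˢ ({1} : Set ℝ) = ∅) ∧
      (A 0 ∩ (Icc 0 1 ×ˢ ({0} : Set ℝ) ∪
        ({0} : Set ℝ) ×ˢ Icc 0 1 ∪ ({1} : Set ℝ) ×ˢ Icc 0 1) = ∅) ∧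
      relClosed unitSquare (A 3) ∧
      relClosed unitSquare (A 2 ∪ A 4) ∧
      relClosed unitSquare (A 1 ∪ A 3 ∪ A 4) ∧
      relClosed unitSquare (unitSquare \ A 0) ∧
      relFrontier unitSquare (A 0) ⊆ A 2 ∪ A 3 ∪ A 4 := by
  rintro ⟨A, -, hdisj, hcover, h₂, h₁, h₄, h₀, hc₃, hc₂₄, hc₁₃₄, hc₀, hfr⟩
  have disjoint_preimage {s t : Set (ℝ × ℝ)} (h : s ∩ t = ∅) :
      Disjoint (Subtype.val ⁻¹' s : Set unitSquare) (Subtype.val ⁻¹' t) := by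
    rw [disjoint_iff_inter_eq_empty, ← preimage_inter, h, preimage_empty]
  refine not_exists_five_partition (A := fun i => (Subtype.val ⁻¹' A i : Set unitSquare))
    (fun i j hij => disjoint_preimage (hdisj i j hij))
    (by rw [← preimage_iUnion, hcover, Subtype.coe_preimage_self])
    ((isPathConnected_Icc_prod_singleton 1).preimage_coe
      top_side_subset_unitSquare).isConnected.isPreconnected
    ((isClosed_Icc.prod isClosed_singleton).preimage continuous_subtype_val)
    (isPathConnected_three_sides.preimage_coe
      three_sides_subset_unitSquare).isConnected.isPreconnected
    (a := ⟨(0, 1), top_side_subset_unitSquare ⟨⟨le_rfl, zero_le_one⟩, rfl⟩⟩)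
    (b := ⟨(1, 1), top_side_subset_unitSquare ⟨⟨zero_le_one, le_rfl⟩, rfl⟩⟩)
    ⟨⟨⟨le_rfl, zero_le_one⟩, rfl⟩, Or.inl (Or.inr ⟨rfl, zero_le_one, le_rfl⟩)⟩
    ⟨⟨⟨zero_le_one, le_rfl⟩, rfl⟩, Or.inr ⟨rfl, zero_le_one, le_rfl⟩⟩
    h₂ h₁ (disjoint_preimage h₄) (disjoint_preimage h₀)
    (isClosed_preimage_val_of_relClosed hc₃) (isClosed_preimage_val_of_relClosed hc₂₄)
    (isClosed_preimage_val_of_relClosed hc₁₃₄) ?_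
    ((frontier_preimage_val_subset_relFrontier _ _).trans (preimage_mono hfr))
  simpa [preimage_sdiff, ← compl_eq_univ_sdiff] using
    (isClosed_preimage_val_of_relClosed hc₀).isOpen_compl
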